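/- arXiv:2408.02163 — 2 statements merged into one kernel-verified Lean document; each statement's English description precedes it below -/
import Mathlib

section
/- Let p be an odd prime and a(j) as above (orders of π_j L_{K(1)} S^0 for j ≥ 1). Consider the alternating partial sums A(m,n) = ∑_{j=m+1}^{m+n} (-1)^j a(j). Then for every m ≥ 0, lim_{n→∞} A(m,n)/(n · (-1/2)·log_p n) = 1. -/
open Filter Real

/-- The order of `π_j L_{K(1)} S⁰` for `j ≥ 1` (at the odd prime `p`):
`p^(k+1)` if `j = 2(p-1)p^k r - 1` with `p ∤ r`, and `1` otherwise. -/
def K1SphereOrder (p j : ℕ) : ℕ :=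
  if 2 * (p - 1) ∣ (j + 1) then p ^ (padicValNat p ((j + 1) / (2 * (p - 1))) + 1) else 1

/-!
Only the stems `j` with `2(p-1) ∣ j + 1` have nontrivial groups, and those `j` are odd, so up to
`O(n)` the sum `A(m,n)` is `-p ∑_{s ≤ N} p^{v_p(s)}` with `N ≈ n / (2(p-1))`. Since
`p^{v_p(s)} = ∑_{p^k ∣ s} φ(p^k)`, counting multiples gives
`∑_{s ≤ N} p^{v_p(s)} = ∑_k φ(p^k) ⌊N / p^k⌋ = (p-1)/p · N log_p N + O(N)`,
and `p · (p-1)/p · n / (2(p-1)) = n/2`.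
-/

open Finset Asymptotics
open scoped Nat

def padicPartSum (p M : ℕ) : ℕ := ∑ s ∈ Ioc 0 M, p ^ padicValNat p s

variable {p : ℕ}

theorem Nat.Prime.sum_range_totient_pow (hp : p.Prime) (n : ℕ) :
    ∑ k ∈ range (n + 1), φ (p ^ k) = p ^ n := by
  rw [← Nat.sum_totient (p ^ n), Nat.divisors_prime_pow hp, sum_map]
  rfl

theorem pow_padicValNat_eq_sum_totient (hp : p.Prime) {s N : ℕ} (hs : s ≠ 0)
    (hN : padicValNat p s ≤ N) :
    p ^ padicValNat p s = ∑ k ∈ range (N + 1) with p ^ k ∣ s, φ (p ^ k) := by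
  have : Fact p.Prime := ⟨hp⟩
  rw [← hp.sum_range_totient_pow]
  congr 1
  ext k
  simp only [mem_range, mem_filter, padicValNat_dvd_iff_le hs]
  omega

theorem padicPartSum_eq_sum_totient (hp : p.Prime) (M : ℕ) :
    padicPartSum p M = ∑ k ∈ range (Nat.log p M + 1), φ (p ^ k) * (M / p ^ k) := by
  have hv (s : ℕ) (hs : s ∈ Ioc 0 M) : padicValNat p s ≤ Nat.log p M :=
    (padicValNat_le_nat_log s).trans (Nat.log_mono_right (mem_Ioc.1 hs).2)
  rw [padicPartSum, sum_congr rfl fun s hs ↦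
    pow_padicValNat_eq_sum_totient hp (mem_Ioc.1 hs).1.ne' (hv s hs)]
  simp_rw [sum_filter]
  rw [sum_comm]
  refine sum_congr rfl fun k _ ↦ ?_
  rw [← Nat.Ioc_filter_dvd_card_eq_div, card_eq_sum_ones, sum_filter, mul_sum]
  simp only [mul_ite, mul_one, mul_zero]

theorem sum_range_totient_pow_div_pow (hp : p.Prime) (K : ℕ) :
    ∑ k ∈ range (K + 1), (φ (p ^ k) : ℝ) / p ^ k = 1 + (p - 1) / p * K := by
  have hp0 : (p : ℝ) ≠ 0 := mod_cast hp.ne_zero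
  induction K with
  | zero => simp
  | succ K ih =>
    rw [sum_range_succ, ih, Nat.totient_prime_pow_succ hp, Nat.cast_mul,
      Nat.cast_sub hp.one_le]
    push_cast
    field_simp
    ring

theorem padicPartSum_sub_mem_Icc (hp : p.Prime) {M : ℕ} (hM : M ≠ 0) :
    (padicPartSum p M : ℝ) - (p - 1) / p * M * Nat.log p M ∈ Set.Icc 0 (M : ℝ) := by
  set K := Nat.log p M
  have hT : (padicPartSum p M : ℝ) = ∑ k ∈ range (K + 1), (φ (p ^ k) : ℝ) * (M / p ^ k : ℕ) := by
    rw [padicPartSum_eq_sum_totient hp]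
    push_cast
    rfl
  have hexact : ∑ k ∈ range (K + 1), (φ (p ^ k) : ℝ) * (M / p ^ k) =
      M + (p - 1) / p * M * K := by
    simp_rw [mul_div_left_comm _ (M : ℝ), ← mul_sum, sum_range_totient_pow_div_pow hp]
    ring
  have hupper : (padicPartSum p M : ℝ) ≤ ∑ k ∈ range (K + 1), (φ (p ^ k) : ℝ) * (M / p ^ k) := by
    rw [hT]
    gcongr with k
    exact_mod_cast Nat.cast_div_le (α := ℝ) (m := M) (n := p ^ k)
  have hlower :
      ∑ k ∈ range (K + 1), (φ (p ^ k) : ℝ) * (M / p ^ k) - p ^ K ≤ padicPartSum p M := by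
    rw [hT, ← Nat.cast_pow, ← hp.sum_range_totient_pow, Nat.cast_sum, ← sum_sub_distrib]
    gcongr with k
    rw [← mul_sub_one]
    gcongr
    rw [← Nat.floor_div_eq_div (K := ℝ), Nat.cast_pow]
    exact (Nat.sub_one_lt_floor _).le
  have hpK : (p : ℝ) ^ K ≤ M := mod_cast Nat.pow_log_le_self p hM
  constructor <;> linarith

theorem isLittleO_natCast_mul_logb {b c : ℝ} (hb : 1 < b) (hc : c ≠ 0) :
    (fun n : ℕ ↦ (n : ℝ)) =o[atTop] fun n ↦ c * n * logb b n := by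
  have hlog : (fun _ ↦ (1 : ℝ)) =o[atTop] logb b :=
    isLittleO_const_logb_atTop ⟨by linarith, by linarith, hb.ne'⟩
  have := ((isBigO_refl (fun n : ℕ ↦ (n : ℝ)) atTop).mul_isLittleO
    (hlog.comp_tendsto tendsto_natCast_atTop_atTop)).const_mul_right hc
  simpa only [Function.comp_apply, mul_one, mul_assoc] using this

theorem isEquivalent_padicPartSum (hp : p.Prime) :
    (fun M : ℕ ↦ (padicPartSum p M : ℝ)) ~[atTop] fun M ↦ (p - 1) / p * M * logb p M := by
  have hp1 : (1 : ℝ) < p := mod_cast hp.one_lt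
  have hc₀ : 0 ≤ ((p : ℝ) - 1) / p := div_nonneg (by linarith) (by linarith)
  have hc₁ : ((p : ℝ) - 1) / p ≤ 1 := by rw [div_le_one₀ (by linarith)]; linarith
  have hO : (fun M : ℕ ↦ (padicPartSum p M : ℝ) - (p - 1) / p * M * logb p M)
      =O[atTop] fun M ↦ (M : ℝ) := by
    refine IsBigO.of_bound 1 (eventually_atTop.2 ⟨1, fun M hM ↦ ?_⟩)
    obtain ⟨hT₁, hT₂⟩ := padicPartSum_sub_mem_Icc hp (Nat.one_le_iff_ne_zero.1 hM)
    have hlog₀ : 0 ≤ logb p M := logb_nonneg hp1 (mod_cast hM)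
    have hK₁ : (Nat.log p M : ℝ) ≤ logb p M := natLog_le_logb M p
    have hK₂ : logb p M - 1 < Nat.log p M := by
      rw [← natFloor_logb_natCast]
      exact Nat.sub_one_lt_floor _
    have hM₀ : (0 : ℝ) ≤ M := M.cast_nonneg
    have hgap₀ : 0 ≤ (p - 1) / p * M * (logb p M - Nat.log p M) :=
      mul_nonneg (mul_nonneg hc₀ hM₀) (by linarith)
    have hgap₁ : (p - 1) / p * M * (logb p M - Nat.log p M) ≤ 1 * M * 1 :=
      mul_le_mul (mul_le_mul_of_nonneg_right hc₁ hM₀) (by linarith) (by linarith) (by positivity)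
    rw [Real.norm_eq_abs, Real.norm_eq_abs, one_mul, Nat.abs_cast, abs_le]
    constructor <;> linarith
  exact IsLittleO.isEquivalent
    (hO.trans_isLittleO (isLittleO_natCast_mul_logb hp1 (by positivity)))

theorem isEquivalent_natCast_add_div (a q : ℕ) (hq : 0 < q) :
    (fun n : ℕ ↦ (((a + n) / q : ℕ) : ℝ)) ~[atTop] fun n ↦ (n : ℝ) / q := by
  have hq' : (0 : ℝ) < q := mod_cast hq
  have hlin : Tendsto (fun n : ℕ ↦ (n : ℝ) / q) atTop atTop :=
    tendsto_natCast_atTop_atTop.atTop_div_const hq'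
  have hshift : (fun n : ℕ ↦ ((a + n : ℕ) : ℝ) / q) ~[atTop] fun n ↦ (n : ℝ) / q := by
    refine (IsEquivalent.refl.const_add_of_norm_tendsto_atTop
      (tendsto_norm_atTop_atTop.comp hlin) (c := (a : ℝ) / q)).congr_left ?_
    exact Eventually.of_forall fun n ↦ by push_cast; ring
  refine (((isEquivalent_nat_floor (R := ℝ)).comp_tendsto
    (hshift.symm.tendsto_atTop hlin)).trans hshift).congr_left (Eventually.of_forall fun n ↦ ?_)
  simp only [Function.comp_apply, Nat.floor_div_eq_div]

theorem Asymptotics.IsEquivalent.log_of_const_mul {α : Type*} {l : Filter α} {u v : α → ℝ} {c : ℝ}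
    (hc : 0 < c) (huv : u ~[l] fun x ↦ c * v x) (hv : Tendsto v l atTop) :
    (fun x ↦ Real.log (u x)) ~[l] fun x ↦ Real.log (v x) := by
  have hcv : Tendsto (fun x ↦ c * v x) l atTop := hv.const_mul_atTop hc
  refine ((huv.log hcv).trans ?_)
  refine (IsEquivalent.refl.const_add_of_norm_tendsto_atTop
    (tendsto_norm_atTop_atTop.comp (tendsto_log_atTop.comp hv)) (c := Real.log c)).congr_left ?_
  filter_upwards [hv.eventually_gt_atTop 0] with x hx
  rw [log_mul hc.ne' hx.ne', Function.comp_apply]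

theorem isEquivalent_padicPartSum_add_div (hp : p.Prime) (a : ℕ) {q : ℕ} (hq : 0 < q) :
    (fun n : ℕ ↦ (padicPartSum p ((a + n) / q) : ℝ))
      ~[atTop] fun n ↦ (p - 1) / p * (n / q) * logb p n := by
  have hN := isEquivalent_natCast_add_div a q hq
  have hN_top : Tendsto (fun n ↦ (a + n) / q) atTop atTop :=
    (Nat.tendsto_div_const_atTop hq.ne').comp (tendsto_atTop_mono (Nat.le_add_left · a) tendsto_id)
  have hT := (isEquivalent_padicPartSum hp).comp_tendsto hN_top
  have hlog : (fun n : ℕ ↦ logb p (((a + n) / q : ℕ) : ℝ)) ~[atTop] fun n ↦ logb p n := by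
    have hN' : (fun n : ℕ ↦ (((a + n) / q : ℕ) : ℝ)) ~[atTop] fun n ↦ (q : ℝ)⁻¹ * n :=
      hN.congr_right (Eventually.of_forall fun n ↦ div_eq_inv_mul (n : ℝ) q)
    exact (hN'.log_of_const_mul (inv_pos.2 (mod_cast hq)) tendsto_natCast_atTop_atTop).div
      IsEquivalent.refl
  exact hT.trans ((IsEquivalent.refl.mul hN).mul hlog)

theorem neg_one_pow_mul_K1SphereOrder (p j : ℕ) :
    (-1 : ℝ) ^ j * K1SphereOrder p j = (-1) ^ j +
      if 2 * (p - 1) ∣ j + 1 then 1 - p * (p : ℝ) ^ padicValNat p ((j + 1) / (2 * (p - 1)))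
      else 0 := by
  unfold K1SphereOrder
  split_ifs with h
  · have hj : Odd j := by
      have := (Dvd.intro _ rfl : 2 ∣ 2 * (p - 1)).trans h
      rw [Nat.odd_iff]
      omega
    rw [hj.neg_one_pow]
    push_cast
    ring
  · simp

theorem sum_Ioc_filter_dvd_add_one {β : Type*} [AddCommMonoid β] {q : ℕ} (hq : 0 < q)
    (a b : ℕ) (F : ℕ → β) :
    ∑ j ∈ Ioc a b with q ∣ j + 1, F ((j + 1) / q) = ∑ s ∈ Ioc ((a + 1) / q) ((b + 1) / q), F s := by
  refine sum_nbij' (fun j ↦ (j + 1) / q) (fun s ↦ q * s - 1) ?_ ?_ ?_ ?_ fun _ _ ↦ rfl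
  · intro j hj
    simp only [mem_filter, mem_Ioc] at hj ⊢
    obtain ⟨⟨hlo, hhi⟩, hd⟩ := hj
    rw [Nat.div_lt_iff_lt_mul hq, Nat.div_mul_cancel hd]
    exact ⟨by omega, Nat.div_le_div_right (by omega)⟩
  · intro s hs
    simp only [mem_filter, mem_Ioc] at hs ⊢
    obtain ⟨hlo, hhi⟩ := hs
    rw [Nat.div_lt_iff_lt_mul hq] at hlo
    rw [Nat.le_div_iff_mul_le hq] at hhi
    have hs : 0 < s := Nat.pos_of_ne_zero (by rintro rfl; omega)
    refine ⟨⟨?_, ?_⟩, ?_⟩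
    · rw [mul_comm] at hlo; omega
    · rw [mul_comm] at hhi; omega
    · rw [Nat.sub_add_cancel (Nat.mul_pos hq hs)]; exact Dvd.intro s rfl
  · intro j hj
    simp only [mem_filter] at hj
    simp only [Nat.mul_div_cancel' hj.2, Nat.add_sub_cancel]
  · intro s hs
    simp only [mem_Ioc] at hs
    have hs : 0 < s := (Nat.zero_le _).trans_lt hs.1
    simp only [Nat.sub_add_cancel (Nat.mul_pos hq hs), Nat.mul_div_cancel_left s hq]

theorem sum_Ioc_neg_one_pow_mul_K1SphereOrder (hp : 1 < p) (m n : ℕ) :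
    ∑ j ∈ Ioc m (m + n), (-1 : ℝ) ^ j * K1SphereOrder p j =
      ∑ j ∈ Ioc m (m + n), (-1 : ℝ) ^ j
        + ((((m + 1 + n) / (2 * (p - 1)) : ℕ) : ℝ)
          - p * padicPartSum p ((m + 1 + n) / (2 * (p - 1))))
        - ((((m + 1) / (2 * (p - 1)) : ℕ) : ℝ)
          - p * padicPartSum p ((m + 1) / (2 * (p - 1)))) := by
  have hq : 0 < 2 * (p - 1) := by omega
  have hpart (M : ℕ) : (M : ℝ) - p * padicPartSum p M =
      ∑ s ∈ Ioc 0 M, (1 - p * (p : ℝ) ^ padicValNat p s) := by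
    simp [padicPartSum, sum_sub_distrib, mul_sum]
  rw [sum_congr rfl fun j _ ↦ neg_one_pow_mul_K1SphereOrder p j, sum_add_distrib, ← sum_filter,
    sum_Ioc_filter_dvd_add_one hq _ _ fun s ↦ 1 - p * (p : ℝ) ^ padicValNat p s,
    add_right_comm m n 1, hpart, hpart,
    ← sum_Ioc_consecutive _ (Nat.zero_le _) (Nat.div_le_div_right (Nat.le_add_right (m + 1) n))]
  ring

theorem isBigO_sum_Ioc_neg_one_pow_add_div (m q : ℕ) (C : ℝ) :
    (fun n : ℕ ↦ ∑ j ∈ Ioc m (m + n), (-1 : ℝ) ^ j + (((m + 1 + n) / q : ℕ) : ℝ) - C)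
      =O[atTop] fun n ↦ (n : ℝ) := by
  refine IsBigO.of_bound (3 + |C|) ?_
  filter_upwards [eventually_ge_atTop (m + 1)] with n hn
  have hE : |∑ j ∈ Ioc m (m + n), (-1 : ℝ) ^ j| ≤ n :=
    (abs_sum_le_sum_abs _ _).trans (by simp)
  have hM : (((m + 1 + n) / q : ℕ) : ℝ) ≤ 2 * n :=
    mod_cast (Nat.div_le_self _ _).trans (by omega)
  have hn : (1 : ℝ) ≤ n := mod_cast (by omega : 1 ≤ n)
  rw [Real.norm_eq_abs, Real.norm_eq_abs, Nat.abs_cast, abs_le]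
  rw [abs_le] at hE
  constructor <;> nlinarith [abs_nonneg C, le_abs_self C, neg_abs_le C]

theorem statement16_general (p : ℕ) (hp : p.Prime) :
    ∀ m : ℕ, Tendsto (fun n : ℕ =>
      (∑ j ∈ Finset.Ioc m (m + n), (-1 : ℝ) ^ j * (K1SphereOrder p j : ℝ)) /
        (n * (-(1 / 2)) * Real.logb p n)) atTop (nhds 1) := by
  intro m
  have hp1 : (1 : ℝ) < p := mod_cast hp.one_lt
  set q := 2 * (p - 1)
  have hq : 0 < q := by have := hp.two_le; omega
  set C := (((m + 1) / q : ℕ) : ℝ) - p * padicPartSum p ((m + 1) / q)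
  have hmain : (fun n : ℕ ↦ -(p * (padicPartSum p ((m + 1 + n) / q) : ℝ)))
      ~[atTop] fun n ↦ n * (-(1 / 2)) * logb p n := by
    refine (IsEquivalent.refl.mul (isEquivalent_padicPartSum_add_div hp (m + 1) hq)).neg.congr_right
      (Eventually.of_forall fun n ↦ ?_)
    have hp1' : (p : ℝ) - 1 ≠ 0 := by linarith
    simp only [Pi.mul_apply, q]
    push_cast [Nat.cast_sub hp.one_le]
    field_simp
  have hlittle : (fun n : ℕ ↦ (n : ℝ)) =o[atTop] fun n ↦ n * (-(1 / 2)) * logb p n :=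
    (isLittleO_natCast_mul_logb hp1 (c := -(1 / 2)) (by norm_num)).congr_right fun n ↦ by ring
  have hA := hmain.add_isLittleO
    ((isBigO_sum_Ioc_neg_one_pow_add_div m q C).trans_isLittleO hlittle)
  have hv : ∀ᶠ n : ℕ in atTop, (n : ℝ) * (-(1 / 2)) * logb p n ≠ 0 := by
    filter_upwards [eventually_ge_atTop 2] with n hn
    have hlog : 0 < logb p n := logb_pos hp1 (mod_cast hn)
    have hn : (0 : ℝ) < n := by positivity
    exact mul_ne_zero (mul_ne_zero hn.ne' (by norm_num)) hlog.ne'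
  refine (isEquivalent_iff_tendsto_one hv).1 (hA.congr_left (Eventually.of_forall fun n ↦ ?_))
  simp only [Pi.add_apply, sum_Ioc_neg_one_pow_mul_K1SphereOrder hp.one_lt, C, q]
  ring

/-- For every `m`, the alternating partial sums `A(m,n) = ∑_{j=m+1}^{m+n} (-1)^j a(j)`
of the orders of the `K(1)`-local stable stems of the sphere satisfy
`A(m,n)/(n·(-1/2)·log_p n) → 1`: the graded average of the orders of `n`
consecutive `K(1)`-local homotopy groups grows like `-(1/2)·log_p(n)`. -/
theorem statement16 (p : ℕ) (hp : p.Prime) (hodd : Odd p) :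
    ∀ m : ℕ, Tendsto (fun n : ℕ =>
      (∑ j ∈ Finset.Ioc m (m + n), (-1 : ℝ) ^ j * (K1SphereOrder p j : ℝ)) /
        (n * (-(1 / 2)) * Real.logb p n)) atTop (nhds 1) :=
  statement16_general p hp
end

section
/- Let p be an odd prime and let f(T) = ∏_{i∈S} (T - (1+p)^i + 1)^{r_i} for a finite set S of integers all congruent to j mod p-1 and positive integers r_i. Then for every integer n with n ≡ 1-j (mod p-1) and n + i ≠ 1 for all i ∈ S, v_p(f((1+p)^{1-n}-1)) = ∑_{i∈S} r_i·(1 + v_p(n+i-1)). -/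
/-!
Since `v_p(1 + p) = 0`, the lifting-the-exponent lemma for the odd prime `p` gives
`v_p((1 + p)^a - (1 + p)^b) = 1 + v_p(a - b)` for all integers `a ≠ b`. Each factor of the
product is `(1 + p)^(1 - n) - (1 + p)^i`, so its valuation is `1 + v_p(n + i - 1)`, and the
valuation of the product is the weighted sum of these.
-/

lemma padicValInt_neg (p : ℕ) (z : ℤ) : padicValInt p (-z) = padicValInt p z := by
  rw [padicValInt, padicValInt, Int.natAbs_neg]

namespace Padic

variable {p : ℕ} [Fact p.Prime]

lemma ne_zero_of_valuation_ne_zero {x : ℚ_[p]} (hx : x.valuation ≠ 0) : x ≠ 0 := by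
  rintro rfl
  exact hx valuation_zero

lemma valuation_neg (x : ℚ_[p]) : (-x).valuation = x.valuation := by
  obtain rfl | hx := eq_or_ne x 0
  · simp
  have hneg_one : (-1 : ℚ_[p]).valuation = 0 := by
    simpa [padicValInt] using valuation_intCast (p := p) (-1)
  rw [neg_eq_neg_one_mul, valuation_mul (by norm_num) hx, hneg_one, zero_add]

lemma valuation_prod {ι : Type*} (s : Finset ι) (f : ι → ℚ_[p]) (hf : ∀ i ∈ s, f i ≠ 0) :
    (∏ i ∈ s, f i).valuation = ∑ i ∈ s, (f i).valuation := by
  induction s using Finset.cons_induction with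
  | empty => simp
  | cons a s ha ih =>
    rw [Finset.forall_mem_cons] at hf
    rw [Finset.prod_cons, Finset.sum_cons, valuation_mul hf.1 (Finset.prod_ne_zero_iff.mpr hf.2),
      ih hf.2]

lemma one_add_p_eq_natCast : (1 + p : ℚ_[p]) = ((p + 1 : ℕ) : ℚ_[p]) := by
  push_cast
  ring

lemma not_dvd_p_add_one : ¬ p ∣ p + 1 := fun h =>
  (Fact.out : p.Prime).one_lt.ne' (Nat.dvd_one.mp ((Nat.dvd_add_right dvd_rfl).mp h))

lemma one_add_p_ne_zero : (1 + p : ℚ_[p]) ≠ 0 := by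
  rw [one_add_p_eq_natCast]
  exact Nat.cast_ne_zero.mpr (Nat.succ_ne_zero p)

lemma valuation_one_add_p : (1 + p : ℚ_[p]).valuation = 0 := by
  rw [one_add_p_eq_natCast, valuation_natCast, padicValNat.eq_zero_of_not_dvd not_dvd_p_add_one,
    Nat.cast_zero]

lemma valuation_one_add_p_pow_sub_one (hp : Odd p) {k : ℕ} (hk : k ≠ 0) :
    ((1 + p : ℚ_[p]) ^ k - 1).valuation = 1 + padicValNat p k := by
  have hlt : 1 < p + 1 := Nat.lt_add_of_pos_left (Fact.out : p.Prime).pos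
  have hcast : (1 + p : ℚ_[p]) ^ k - 1 = (((p + 1) ^ k - 1 ^ k : ℕ) : ℚ_[p]) := by
    rw [Nat.cast_sub (Nat.pow_le_pow_left hlt.le k), one_add_p_eq_natCast]
    push_cast
    ring
  rw [hcast, valuation_natCast, padicValNat.pow_sub_pow hp hlt (by simp) not_dvd_p_add_one hk,
    Nat.add_sub_cancel, padicValNat_self, Nat.cast_add, Nat.cast_one]

lemma valuation_one_add_p_zpow_sub_one (hp : Odd p) {m : ℤ} (hm : m ≠ 0) :
    ((1 + p : ℚ_[p]) ^ m - 1).valuation = 1 + padicValInt p m := by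
  obtain ⟨k, rfl | rfl⟩ := Int.eq_nat_or_neg m
  · rw [zpow_natCast, valuation_one_add_p_pow_sub_one hp (by omega), padicValInt.of_nat]
  have hk : k ≠ 0 := by omega
  have hx : (1 + p : ℚ_[p]) ^ k ≠ 0 := pow_ne_zero k one_add_p_ne_zero
  have hval := valuation_one_add_p_pow_sub_one hp hk
  have hsub : (1 + p : ℚ_[p]) ^ k - 1 ≠ 0 := ne_zero_of_valuation_ne_zero (by rw [hval]; positivity)
  rw [zpow_neg, zpow_natCast,
    show ((1 + p : ℚ_[p]) ^ k)⁻¹ - 1 = ((1 + p : ℚ_[p]) ^ k)⁻¹ * -((1 + p) ^ k - 1) by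
      field_simp; ring,
    valuation_mul (inv_ne_zero hx) (neg_ne_zero.mpr hsub), valuation_neg, hval, valuation_inv,
    valuation_pow, valuation_one_add_p, padicValInt_neg, padicValInt.of_nat]
  ring

lemma valuation_one_add_p_zpow_sub_zpow (hp : Odd p) {a b : ℤ} (hab : a ≠ b) :
    ((1 + p : ℚ_[p]) ^ a - (1 + p) ^ b).valuation = 1 + padicValInt p (a - b) := by
  have hval := valuation_one_add_p_zpow_sub_one hp (sub_ne_zero.mpr hab)
  have hx : (1 + p : ℚ_[p]) ≠ 0 := one_add_p_ne_zero
  rw [show (1 + p : ℚ_[p]) ^ a - (1 + p) ^ b = (1 + p) ^ b * ((1 + p) ^ (a - b) - 1) by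
      rw [mul_sub, ← zpow_add₀ hx, add_sub_cancel, mul_one],
    valuation_mul (zpow_ne_zero _ hx) (ne_zero_of_valuation_ne_zero (by rw [hval]; positivity)),
    hval, valuation_zpow, valuation_one_add_p, mul_zero, zero_add]

end Padic

open Padic in
theorem statement18_general (p : ℕ) [Fact p.Prime] (hp : Odd p) (n : ℤ)
    (S : Finset ℤ) (r : ℤ → ℕ)
    (hni : ∀ i ∈ S, n + i ≠ 1) :
    (∏ i ∈ S,
        (((1 + (p : ℚ_[p])) ^ (1 - n) - 1) - (1 + (p : ℚ_[p])) ^ i + 1) ^ (r i)).valuation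
      = ∑ i ∈ S, (r i : ℤ) * (1 + (padicValInt p (n + i - 1) : ℤ)) := by
  have hval : ∀ i ∈ S, (((1 + (p : ℚ_[p])) ^ (1 - n) - 1) - (1 + (p : ℚ_[p])) ^ i + 1).valuation
      = 1 + padicValInt p (n + i - 1) := by
    intro i hi
    have hne : 1 - n ≠ i := by grind
    rw [sub_right_comm _ 1, sub_add_cancel, valuation_one_add_p_zpow_sub_zpow hp hne,
      show 1 - n - i = -(n + i - 1) by ring, padicValInt_neg]
  rw [valuation_prod _ _ fun i hi =>
    pow_ne_zero _ (ne_zero_of_valuation_ne_zero (by rw [hval i hi]; positivity))]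
  exact Finset.sum_congr rfl fun i hi => by rw [valuation_pow, hval i hi]

/-- Let `p` be an odd prime and `f(T) = ∏_{i∈S} (T - (1+p)^i + 1)^{r_i}` for a finite
set `S` of integers all congruent to `j mod p-1` and positive integers `r_i`.
For every `n ≡ 1-j (mod p-1)` with `n + i ≠ 1` for all `i ∈ S`,
`v_p(f((1+p)^{1-n}-1)) = ∑_{i∈S} r_i·(1 + v_p(n+i-1))`. -/
theorem statement18 (p : ℕ) [Fact p.Prime] (hp : Odd p) (j n : ℤ)
    (S : Finset ℤ) (r : ℤ → ℕ) (hr : ∀ i ∈ S, 0 < r i)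
    (hS : ∀ i ∈ S, ((p : ℤ) - 1) ∣ (i - j))
    (hn : ((p : ℤ) - 1) ∣ (n - (1 - j)))
    (hni : ∀ i ∈ S, n + i ≠ 1) :
    (∏ i ∈ S,
        (((1 + (p : ℚ_[p])) ^ (1 - n) - 1) - (1 + (p : ℚ_[p])) ^ i + 1) ^ (r i)).valuation
      = ∑ i ∈ S, (r i : ℤ) * (1 + (padicValInt p (n + i - 1) : ℤ)) :=
  statement18_general p hp n S r hni
end
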